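/- In B_n the identities J'(b_2, d_2, a) = b_2, J'(b_2, d_2, 0) = c_2, and for all 2 ≤ l ≤ n, J'(b_l, d_l, b_{l−1}) = b_l and J'(b_l, d_l, c_{l−1}) = c_l hold (where b_1 = a and c_1 = 0). Consequently (b_n, c_n) belongs to the congruence of B_n generated by the pair (a, 0). -/
import Mathlib


/-- The three-element set `M = {0, D, ∂D}`. -/
inductive Mc : Type
  | z : Mc
  | D : Mc
  | pD : Mc
deriving DecidableEq

/-- The fixed-point-free involution `∂` exchanging `D` and `∂D`
(its value on `0` is irrelevant to the operations below). -/
def pd : Mc → Mc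
  | Mc.D => Mc.pD
  | Mc.pD => Mc.D
  | Mc.z => Mc.z

/-- Height-1 meet on `M`: `x ∧ y = x` if `x = y`, else `0`. -/
def mmt (x y : Mc) : Mc := if x = y then x else Mc.z

/-- `J(x,y,w) = x` if `x = y`; `x ∧ w` if `x = ∂y`; `0` otherwise. -/
def mJ (x y w : Mc) : Mc := if x = y then x else if x = pd y then mmt x w else Mc.z

/-- `J'(x,y,w) = x ∧ w` if `x = y`; `x` if `x = ∂y`; `0` otherwise. -/
def mJ' (x y w : Mc) : Mc := if x = y then mmt x w else if x = pd y then x else Mc.z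

/-- Pointwise meet on `M^n`. -/
def vmt {n : ℕ} (x y : Fin n → Mc) : Fin n → Mc := fun l => mmt (x l) (y l)

/-- Pointwise `J` on `M^n`. -/
def vJ {n : ℕ} (x y w : Fin n → Mc) : Fin n → Mc := fun l => mJ (x l) (y l) (w l)

/-- Pointwise `J'` on `M^n`. -/
def vJ' {n : ℕ} (x y w : Fin n → Mc) : Fin n → Mc := fun l => mJ' (x l) (y l) (w l)

/-- The zero tuple in `M^n`. -/
def vz (n : ℕ) : Fin n → Mc := fun _ => Mc.z

/-- `b_i`: `D` in (1-indexed) coordinates `1..i`, `0` afterwards. -/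
def vb (n i : ℕ) : Fin n → Mc := fun l => if l.val < i then Mc.D else Mc.z

/-- `d_i`: `D` in coordinates `1..i-1`, `∂D` in coordinate `i`, `0` afterwards. -/
def vd (n i : ℕ) : Fin n → Mc := fun l =>
  if l.val + 1 < i then Mc.D else if l.val + 1 = i then Mc.pD else Mc.z

/-- `c_i`: `0` in coordinate `1`, `D` in coordinates `2..i`, `0` afterwards. -/
def vc (n i : ℕ) : Fin n → Mc := fun l =>
  if l.val = 0 then Mc.z else if l.val < i then Mc.D else Mc.z

/-- `a = b_1 = (D,0,…,0)`. -/
def va (n : ℕ) : Fin n → Mc := vb n 1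

/-- The subuniverse `B_n` of `M^n`, generated by `{a} ∪ {b_i, d_i : 2 ≤ i ≤ n}`
under the pointwise operations `∧`, `J`, `J'`. -/
inductive Bn (n : ℕ) : (Fin n → Mc) → Prop
  | gen_a : Bn n (va n)
  | gen_b (i : ℕ) (h2 : 2 ≤ i) (hn : i ≤ n) : Bn n (vb n i)
  | gen_d (i : ℕ) (h2 : 2 ≤ i) (hn : i ≤ n) : Bn n (vd n i)
  | cmt {x y} : Bn n x → Bn n y → Bn n (vmt x y)
  | cJ {x y w} : Bn n x → Bn n y → Bn n w → Bn n (vJ x y w)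
  | cJ' {x y w} : Bn n x → Bn n y → Bn n w → Bn n (vJ' x y w)

/-- The congruence of the algebra with universe `C` (a subuniverse of `M^n`) generated by the
pair `(a, b)`: the smallest equivalence relation on `C` containing `(a,b)` and compatible with
the operations `∧`, `J`, `J'`. -/
inductive CgC {n : ℕ} (C : (Fin n → Mc) → Prop) (a b : Fin n → Mc) :
    (Fin n → Mc) → (Fin n → Mc) → Prop
  | base : CgC C a b a b
  | refl {x} (hx : C x) : CgC C a b x x
  | symm {x y} : CgC C a b x y → CgC C a b y x
  | trans {x y z} : CgC C a b x y → CgC C a b y z → CgC C a b x z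
  | cmt {x x' y y'} : CgC C a b x x' → CgC C a b y y' → CgC C a b (vmt x y) (vmt x' y')
  | cJ {x x' y y' w w'} : CgC C a b x x' → CgC C a b y y' → CgC C a b w w' →
      CgC C a b (vJ x y w) (vJ x' y' w')
  | cJ' {x x' y y' w w'} : CgC C a b x x' → CgC C a b y y' → CgC C a b w w' →
      CgC C a b (vJ' x y w) (vJ' x' y' w')

/-- Unary polynomials of the algebra with universe `C`: functions built by composition from
the operations `∧`, `J`, `J'`, constants from `C`, and the identity. -/
inductive PolyC {n : ℕ} (C : (Fin n → Mc) → Prop) : ((Fin n → Mc) → (Fin n → Mc)) → Prop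
  | id : PolyC C id
  | const {c} (h : C c) : PolyC C (fun _ => c)
  | pmt {f g} : PolyC C f → PolyC C g → PolyC C (fun x => vmt (f x) (g x))
  | pJ {f g h} : PolyC C f → PolyC C g → PolyC C h → PolyC C (fun x => vJ (f x) (g x) (h x))
  | pJ' {f g h} : PolyC C f → PolyC C g → PolyC C h → PolyC C (fun x => vJ' (f x) (g x) (h x))

/-- Fundamental translations of the algebra with universe `C`: unary polynomials obtained from
one of the operations `∧`, `J`, `J'` by fixing all but one argument at constants from `C`. -/
inductive FT {n : ℕ} (C : (Fin n → Mc) → Prop) : ((Fin n → Mc) → (Fin n → Mc)) → Prop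
  | mtL {c} (h : C c) : FT C (fun x => vmt x c)
  | mtR {c} (h : C c) : FT C (fun x => vmt c x)
  | J1 {c d} (hc : C c) (hd : C d) : FT C (fun x => vJ x c d)
  | J2 {c d} (hc : C c) (hd : C d) : FT C (fun x => vJ c x d)
  | J3 {c d} (hc : C c) (hd : C d) : FT C (fun x => vJ c d x)
  | J'1 {c d} (hc : C c) (hd : C d) : FT C (fun x => vJ' x c d)
  | J'2 {c d} (hc : C c) (hd : C d) : FT C (fun x => vJ' c x d)
  | J'3 {c d} (hc : C c) (hd : C d) : FT C (fun x => vJ' c d x)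

/-- The support of a tuple: the set of coordinates where it is nonzero. -/
def suppF {n : ℕ} (x : Fin n → Mc) : Finset (Fin n) :=
  Finset.univ.filter (fun l => x l ≠ Mc.z)

lemma vc_one (n : ℕ) : vc n 1 = vz n := by
  funext k
  simp only [vc, vz]
  split_ifs with h1 h2 <;> first | rfl | omega

lemma idb (n l : ℕ) (h2 : 2 ≤ l) :
    vJ' (vb n l) (vd n l) (vb n (l - 1)) = vb n l := by
  funext k
  simp only [vJ', mJ', vb, vd, mmt, pd]
  split_ifs <;> simp_all <;> omega

lemma idc (n l : ℕ) (h2 : 2 ≤ l) :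
    vJ' (vb n l) (vd n l) (vc n (l - 1)) = vc n l := by
  funext k
  simp only [vJ', mJ', vb, vd, vc, mmt, pd]
  split_ifs <;> simp_all <;> omega

lemma key (n : ℕ) : ∀ l, 2 ≤ l → l ≤ n →
    CgC (Bn n) (va n) (vz n) (vb n l) (vc n l) := by
  intro l h2 hln
  induction l, h2 using Nat.le_induction with
  | base =>
    have h := CgC.cJ' (a := va n) (b := vz n)
      (CgC.refl (Bn.gen_b 2 le_rfl hln)) (CgC.refl (Bn.gen_d 2 le_rfl hln))
      CgC.base
    have e1 : vJ' (vb n 2) (vd n 2) (va n) = vb n 2 := idb n 2 le_rfl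
    have e2 : vJ' (vb n 2) (vd n 2) (vz n) = vc n 2 := by
      have := idc n 2 le_rfl
      rwa [vc_one] at this
    rwa [e1, e2] at h
  | succ l hl ih =>
    have hln' : l ≤ n := le_of_lt hln
    have h := CgC.cJ'
      (CgC.refl (Bn.gen_b (l+1) (by omega) hln))
      (CgC.refl (Bn.gen_d (l+1) (by omega) hln))
      (ih hln')
    have e1 : vJ' (vb n (l+1)) (vd n (l+1)) (vb n l) = vb n (l+1) := by
      have := idb n (l+1) (by omega); simpa using this
    have e2 : vJ' (vb n (l+1)) (vd n (l+1)) (vc n l) = vc n (l+1) := by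
      have := idc n (l+1) (by omega); simpa using this
    rwa [e1, e2] at h

/-- The identities `J'(b_2,d_2,a) = b_2`, `J'(b_2,d_2,0) = c_2`, and for `2 ≤ l ≤ n`,
`J'(b_l,d_l,b_{l-1}) = b_l` and `J'(b_l,d_l,c_{l-1}) = c_l` hold (with `b_1 = a`, `c_1 = 0`).
Consequently `(b_n, c_n)` belongs to the congruence of `B_n` generated by `(a, 0)`. -/
theorem bn_cn_in_Cg_a_zero {n : ℕ} (hn : 2 ≤ n) :
    vJ' (vb n 2) (vd n 2) (va n) = vb n 2 ∧
    vJ' (vb n 2) (vd n 2) (vz n) = vc n 2 ∧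
    (∀ l : ℕ, 2 ≤ l → l ≤ n →
      vJ' (vb n l) (vd n l) (vb n (l - 1)) = vb n l ∧
      vJ' (vb n l) (vd n l) (vc n (l - 1)) = vc n l) ∧
    CgC (Bn n) (va n) (vz n) (vb n n) (vc n n) := by
  refine ⟨idb n 2 le_rfl, ?_, fun l h2 hl => ⟨idb n l h2, idc n l h2⟩, key n n hn le_rfl⟩
  have := idc n 2 le_rfl
  rwa [vc_one] at this
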